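/- (Proposition 1) Let x_n, x_m ∈ A_{d+1} and v_n, v_m, f, ℓ ∈ ℝ. Then the following are equivalent: (i) x_n, x_m ∈ H_d, v_n = ‖x_n‖₂², v_m = ‖x_m‖₂², ℓ = η(x_n, x_m), and f = ⟨x_n, x_m⟩; (ii) the matrix Q(x_n, x_m, v_n, v_m, f, ℓ) is positive semi-definite and has rank d+1. -/

import Mathlib

/-!
Since the upper-left block of `Q = [I, Bᵀ; B, C]` is the identity, eliminating it shows
`rank Q = (d + 1) + rank (C - B Bᵀ)`. So `rank Q = d + 1` says exactly that `C = B Bᵀ` is the Gram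
matrix of `x_n, x̃_n, x_m, x̃_m`, and then `Q = [I, Bᵀ]ᵀ [I, Bᵀ]` is automatically positive
semidefinite. As `⟨x, ỹ⟩ = η(x, y)` and `⟨x̃, ỹ⟩ = ⟨x, y⟩`, the sixteen Gram entries are precisely
the equations of (i).
-/

open Finset Matrix

/-- The Minkowski bilinear form on `ℝ^{d+1}`. -/
noncomputable def minkowski {d : ℕ} (x y : Fin (d+1) → ℝ) : ℝ :=
  (∑ i : Fin d, x i.castSucc * y i.castSucc) - x (Fin.last d) * y (Fin.last d)

/-- The hyperbolic space `H_d`. -/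
def hyperSheet (d : ℕ) : Set (Fin (d+1) → ℝ) :=
  {x | minkowski x x = -1 ∧ 0 < x (Fin.last d)}

/-- `ξ̃ = (ξ_1, …, ξ_d, −ξ_{d+1})`. -/
def tilde {d : ℕ} (x : Fin (d+1) → ℝ) : Fin (d+1) → ℝ :=
  fun i => if i = Fin.last d then -x i else x i

/-- The symmetric `(d+5)×(d+5)` block matrix
`Q = [I_{d+1}, x_n, x̃_n, x_m, x̃_m; x_nᵀ, v_n, −1, f, ℓ; x̃_nᵀ, −1, v_n, ℓ, f;
x_mᵀ, f, ℓ, v_m, −1; x̃_mᵀ, ℓ, f, −1, v_m]`. -/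
noncomputable def Qmat {d : ℕ} (xn xm : Fin (d+1) → ℝ) (vn vm f l : ℝ) :
    Matrix (Fin (d+1+4)) (Fin (d+1+4)) ℝ :=
  Matrix.reindex finSumFinEquiv finSumFinEquiv
    (Matrix.fromBlocks 1 (Matrix.of fun i j => ![xn, tilde xn, xm, tilde xm] j i)
      (Matrix.of fun i j => ![xn, tilde xn, xm, tilde xm] i j)
      !![vn, -1, f, l; -1, vn, l, f; f, l, vm, -1; l, f, -1, vm])

namespace Matrix

variable {m n K : Type*} [Fintype m] [Fintype n] [Field K]

omit [Fintype m] in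
theorem rank_eq_zero_iff [DecidableEq n] (M : Matrix m n K) : M.rank = 0 ↔ M = 0 := by
  rw [rank, Submodule.finrank_eq_zero, LinearMap.range_eq_bot, ← toLin'_apply',
    ← map_zero toLin', toLin'.injective.eq_iff]

variable [DecidableEq m]

theorem fromBlocks_one_mulVec_eq_zero_iff (B : Matrix m n K) (B' : Matrix n m K)
    (C : Matrix n n K) (u : m ⊕ n → K) :
    fromBlocks 1 B B' C *ᵥ u = 0 ↔
      u ∘ Sum.inl = -(B *ᵥ (u ∘ Sum.inr)) ∧ (C - B' * B) *ᵥ (u ∘ Sum.inr) = 0 := by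
  rw [fromBlocks_mulVec, one_mulVec, ← Sum.elim_zero_zero, Sum.elim_eq_iff,
    ← eq_neg_iff_add_eq_zero]
  refine and_congr_right fun h => ?_
  rw [h, mulVec_neg, neg_add_eq_sub, sub_mulVec, mulVec_mulVec]

def kerFromBlocksOneEquiv (B : Matrix m n K) (B' : Matrix n m K) (C : Matrix n n K) :
    LinearMap.ker (fromBlocks 1 B B' C).mulVecLin ≃ₗ[K] LinearMap.ker (C - B' * B).mulVecLin where
  toFun u := ⟨u.1 ∘ Sum.inr, ((fromBlocks_one_mulVec_eq_zero_iff B B' C u.1).mp u.2).2⟩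
  invFun w := ⟨Sum.elim (-(B *ᵥ w.1)) w.1,
    (fromBlocks_one_mulVec_eq_zero_iff B B' C _).mpr ⟨rfl, w.2⟩⟩
  map_add' _ _ := rfl
  map_smul' _ _ := rfl
  left_inv u := by
    ext1
    rw [← Sum.elim_comp_inl_inr u.1, ((fromBlocks_one_mulVec_eq_zero_iff B B' C u.1).mp u.2).1]
  right_inv _ := rfl

theorem rank_fromBlocks_one (B : Matrix m n K) (B' : Matrix n m K) (C : Matrix n n K) :
    (fromBlocks 1 B B' C).rank = Fintype.card m + (C - B' * B).rank := by
  have hQ := LinearMap.finrank_range_add_finrank_ker (fromBlocks 1 B B' C).mulVecLin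
  have hS := LinearMap.finrank_range_add_finrank_ker (C - B' * B).mulVecLin
  rw [(kerFromBlocksOneEquiv B B' C).finrank_eq] at hQ
  simp only [Module.finrank_fintype_fun_eq_card, Fintype.card_sum] at hQ hS
  rw [rank, rank]
  omega

theorem rank_fromBlocks_one_eq_card_iff [DecidableEq n] (B : Matrix m n K) (B' : Matrix n m K)
    (C : Matrix n n K) : (fromBlocks 1 B B' C).rank = Fintype.card m ↔ C = B' * B := by
  rw [rank_fromBlocks_one, Nat.add_eq_left, rank_eq_zero_iff, sub_eq_zero]

theorem posSemidef_fromBlocks_one_mul_conjTranspose {R : Type*} [Ring R] [PartialOrder R]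
    [StarRing R] [StarOrderedRing R] (B : Matrix n m R) :
    (fromBlocks 1 Bᴴ B (B * Bᴴ)).PosSemidef := by
  have h : fromBlocks 1 Bᴴ B (B * Bᴴ) = (fromCols 1 Bᴴ)ᴴ * fromCols 1 Bᴴ := by
    rw [conjTranspose_fromCols_eq_fromRows_conjTranspose, conjTranspose_one,
      conjTranspose_conjTranspose, fromRows_mul_fromCols, Matrix.one_mul, Matrix.one_mul,
      Matrix.mul_one]
  exact h ▸ posSemidef_conjTranspose_mul_self _

theorem posSemidef_and_rank_fromBlocks_one_iff [DecidableEq n] [PartialOrder K] [StarRing K]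
    [StarOrderedRing K] (B : Matrix n m K) (C : Matrix n n K) :
    (fromBlocks 1 Bᴴ B C).PosSemidef ∧ (fromBlocks 1 Bᴴ B C).rank = Fintype.card m ↔
      C = B * Bᴴ := by
  rw [rank_fromBlocks_one_eq_card_iff]
  exact and_iff_right_of_imp fun h => h ▸ posSemidef_fromBlocks_one_mul_conjTranspose B

end Matrix

section Tilde

variable {d : ℕ} (x y : Fin (d+1) → ℝ)

theorem minkowski_comm : minkowski x y = minkowski y x := by
  simp only [minkowski, mul_comm]

theorem dotProduct_tilde : x ⬝ᵥ tilde y = minkowski x y := by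
  simp [dotProduct, minkowski, tilde, Fin.sum_univ_castSucc, (Fin.castSucc_lt_last _).ne,
    sub_eq_add_neg]

theorem tilde_mul_apply (i : Fin (d+1)) : tilde x i * y i = x i * tilde y i := by
  unfold tilde; split_ifs <;> ring

theorem tilde_mul_tilde_apply (i : Fin (d+1)) : tilde x i * tilde y i = x i * y i := by
  unfold tilde; split_ifs <;> ring

theorem tilde_dotProduct : tilde x ⬝ᵥ y = minkowski x y := by
  rw [← dotProduct_tilde]; exact Finset.sum_congr rfl fun i _ => tilde_mul_apply x y i

theorem minkowski_tilde_left : minkowski (tilde x) y = x ⬝ᵥ y := by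
  rw [← dotProduct_tilde]; exact Finset.sum_congr rfl fun i _ => tilde_mul_tilde_apply x y i

end Tilde

section Qmat

variable {d : ℕ} (xn xm : Fin (d+1) → ℝ) (vn vm f l : ℝ)

theorem Qmat_posSemidef_and_rank_iff :
    (Qmat xn xm vn vm f l).PosSemidef ∧ (Qmat xn xm vn vm f l).rank = d + 1 ↔
      !![vn, -1, f, l; -1, vn, l, f; f, l, vm, -1; l, f, -1, vm] =
        of fun a b => ![xn, tilde xn, xm, tilde xm] a ⬝ᵥ ![xn, tilde xn, xm, tilde xm] b := by
  set V : Matrix (Fin 4) (Fin (d+1)) ℝ := of ![xn, tilde xn, xm, tilde xm]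
  have hQ : Qmat xn xm vn vm f l = reindex finSumFinEquiv finSumFinEquiv
      (fromBlocks 1 Vᵀ V !![vn, -1, f, l; -1, vn, l, f; f, l, vm, -1; l, f, -1, vm]) :=
    rfl
  have hblock := posSemidef_and_rank_fromBlocks_one_iff V
    !![vn, -1, f, l; -1, vn, l, f; f, l, vm, -1; l, f, -1, vm]
  rw [Fintype.card_fin, conjTranspose_eq_transpose_of_trivial] at hblock
  rw [hQ, reindex_apply, posSemidef_submatrix_equiv, rank_submatrix, hblock]
  rfl

theorem Qmat_block_eq_gram_iff :
    !![vn, -1, f, l; -1, vn, l, f; f, l, vm, -1; l, f, -1, vm] =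
        of (fun a b => ![xn, tilde xn, xm, tilde xm] a ⬝ᵥ ![xn, tilde xn, xm, tilde xm] b) ↔
      minkowski xn xn = -1 ∧ minkowski xm xm = -1 ∧ vn = xn ⬝ᵥ xn ∧ vm = xm ⬝ᵥ xm ∧
        l = minkowski xn xm ∧ f = xn ⬝ᵥ xm := by
  constructor
  · intro h
    have entry (i j : Fin 4) := congrFun (congrFun h i) j
    exact ⟨(dotProduct_tilde xn xn).symm.trans (entry 0 1).symm,
      (dotProduct_tilde xm xm).symm.trans (entry 2 3).symm, entry 0 0, entry 2 2,
      (entry 0 3).trans (dotProduct_tilde xn xm), entry 0 2⟩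
  · rintro ⟨hn, hm, rfl, rfl, rfl, rfl⟩
    ext i j
    fin_cases i <;> fin_cases j <;>
      simp [dotProduct_tilde, tilde_dotProduct, minkowski_tilde_left, hn, hm,
        dotProduct_comm xm xn, minkowski_comm xm xn]

end Qmat

/-- Proposition 1: for `x_n, x_m ∈ A_{d+1}`, one has `x_n, x_m ∈ H_d`,
`v_n = ‖x_n‖₂²`, `v_m = ‖x_m‖₂²`, `ℓ = η(x_n,x_m)` and `f = ⟨x_n,x_m⟩`
if and only if `Q ⪰ 0` and `rank Q = d+1`. -/
theorem hyperbolic_matrix_characterization (d : ℕ) (xn xm : Fin (d+1) → ℝ)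
    (hxn : 1 ≤ xn (Fin.last d)) (hxm : 1 ≤ xm (Fin.last d)) (vn vm f l : ℝ) :
    (xn ∈ hyperSheet d ∧ xm ∈ hyperSheet d ∧
      vn = ∑ i, xn i ^ 2 ∧ vm = ∑ i, xm i ^ 2 ∧
      l = minkowski xn xm ∧ f = ∑ i, xn i * xm i) ↔
    ((Qmat xn xm vn vm f l).PosSemidef ∧ (Qmat xn xm vn vm f l).rank = d + 1) := by
  rw [Qmat_posSemidef_and_rank_iff, Qmat_block_eq_gram_iff]
  have hn : 0 < xn (Fin.last d) := one_pos.trans_le hxn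
  have hm : 0 < xm (Fin.last d) := one_pos.trans_le hxm
  simp only [hyperSheet, Set.mem_ofPred_eq, hn, hm, and_true, sq, dotProduct]
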